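/- Let W : X1 × X2 → Y be a MAC on finite alphabets, k1, k2 positive integers, and let (r,p) be a feasible point of the relaxed non-signaling linear program whose objective value is 1−ε with 0 ≤ ε < 1. Define the joint distribution P_{X1X2}(x1,x2) := p_{x1,x2}/(k1 k2) and let Y be the output of W on inputs (X1,X2), i.e. P_{X1X2Y}(x1,x2,y) = W(y|x1,x2) P_{X1X2}(x1,x2). Then: log2(k1) ≤ (I(X1:Y|X2) + h(ε))/(1−ε), log2(k2) ≤ (I(X2:Y|X1) + h(ε))/(1−ε), and log2(k1) + log2(k2) ≤ (I((X1,X2):Y) + h(ε))/(1−ε), where h is the binary entropy function. -/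

import Mathlib

open Finset

/-- Shannon entropy (in bits) of a finitely supported distribution `f`. -/
noncomputable def H2 {T : Type*} [Fintype T] (f : T → ℝ) : ℝ :=
  ∑ t, -(f t * Real.logb 2 (f t))

/-- `I(X1:Y|X2)` for a joint distribution `μ` of `(X1,X2,Y)`, via
`I(X:Y|Z) = H(X,Z) + H(Y,Z) − H(Z) − H(X,Y,Z)`. -/
noncomputable def miX1YcX2 {X1 X2 Y : Type*} [Fintype X1] [Fintype X2] [Fintype Y]
    (μ : X1 → X2 → Y → ℝ) : ℝ :=
  H2 (fun q : X1 × X2 => ∑ y, μ q.1 q.2 y)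
    + H2 (fun q : X2 × Y => ∑ x1, μ x1 q.1 q.2)
    - H2 (fun x2 : X2 => ∑ x1, ∑ y, μ x1 x2 y)
    - H2 (fun q : X1 × X2 × Y => μ q.1 q.2.1 q.2.2)

/-- `I(X2:Y|X1)` for a joint distribution `μ` of `(X1,X2,Y)`. -/
noncomputable def miX2YcX1 {X1 X2 Y : Type*} [Fintype X1] [Fintype X2] [Fintype Y]
    (μ : X1 → X2 → Y → ℝ) : ℝ :=
  H2 (fun q : X1 × X2 => ∑ y, μ q.1 q.2 y)
    + H2 (fun q : X1 × Y => ∑ x2, μ q.1 x2 q.2)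
    - H2 (fun x1 : X1 => ∑ x2, ∑ y, μ x1 x2 y)
    - H2 (fun q : X1 × X2 × Y => μ q.1 q.2.1 q.2.2)

/-- `I((X1,X2):Y)` for a joint distribution `μ` of `(X1,X2,Y)`, via
`I(X:Y) = H(X) + H(Y) − H(X,Y)`. -/
noncomputable def miX1X2Y {X1 X2 Y : Type*} [Fintype X1] [Fintype X2] [Fintype Y]
    (μ : X1 → X2 → Y → ℝ) : ℝ :=
  H2 (fun q : X1 × X2 => ∑ y, μ q.1 q.2 y)
    + H2 (fun y : Y => ∑ x1, ∑ x2, μ x1 x2 y)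
    - H2 (fun q : X1 × X2 × Y => μ q.1 q.2.1 q.2.2)

/-- The binary entropy function (in bits). -/
noncomputable def binH (q : ℝ) : ℝ :=
  -(q * Real.logb 2 q) - (1 - q) * Real.logb 2 (1 - q)

/-!
Each bound is an instance of the meta-converse of binary hypothesis testing: if a test `T` accepts
a distribution `P` with probability `1 - ε` and a sub-probability `Q` with probability at most
`1 / k`, then the log-sum inequality, applied to the two outcomes of `T`, gives
`(1 - ε) log k ≤ D(P‖Q) + h(ε)`. Take for `P` the law of `(X1, X2, Y)` and `T = r / p`. Against
`Q = P_{X1X2} P_{Y|X2}` the non-signaling constraint `k1 ∑_{x1} r ≤ ∑_{x1} p` gives `Q[T] ≤ 1 / k1`,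
and `D(P‖Q) = I(X1:Y|X2)`. The second bound is the first with `X1, X2` swapped, the third is the
first for the inputs `(X1, X2)` and a trivial one, using `∑_{x1,x2} r ≤ 1`.
-/

open Real

section LogSum

variable {ι : Type*} [Fintype ι]

lemma sum_pos_of_eq_zero_imp {u v : ι → ℝ} (hv : ∀ i, 0 ≤ v i)
    (huv : ∀ i, v i = 0 → u i = 0) (hu : 0 < ∑ i, u i) : 0 < ∑ i, v i := by
  refine (sum_nonneg fun i _ => hv i).lt_of_ne fun h => hu.ne' ?_
  exact sum_eq_zero fun i _ => huv i ((sum_eq_zero_iff_of_nonneg fun j _ => hv j).1 h.symm i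
    (mem_univ i))

lemma mul_log_add_sub_le_mul_log_div {u v c : ℝ} (hu : 0 ≤ u) (hv : 0 ≤ v)
    (huv : v = 0 → u = 0) (hc : 0 < c) :
    u * log c + u - c * v ≤ u * log (u / v) := by
  rcases hu.eq_or_lt with rfl | hu
  · simp only [zero_mul, add_zero, zero_sub, zero_div, log_zero, mul_zero, Left.neg_nonpos_iff]
    positivity
  have hv : 0 < v := hv.lt_of_ne fun h => hu.ne' (huv h.symm)
  have hlog : log (u / v) = log c - log (c * v / u) := by
    rw [← log_div hc.ne' (by positivity)]
    congr 1
    field_simp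
  have hgibbs := log_le_sub_one_of_pos (show 0 < c * v / u by positivity)
  have hmul : u * (c * v / u - 1) = c * v - u := by field_simp
  rw [hlog]
  nlinarith [mul_le_mul_of_nonneg_left hgibbs hu.le]

/-- The log-sum inequality. -/
theorem sum_mul_log_div_sum_le (u v : ι → ℝ) (hu : ∀ i, 0 ≤ u i) (hv : ∀ i, 0 ≤ v i)
    (huv : ∀ i, v i = 0 → u i = 0) :
    (∑ i, u i) * log ((∑ i, u i) / ∑ i, v i) ≤ ∑ i, u i * log (u i / v i) := by
  rcases (sum_nonneg fun i _ => hu i : 0 ≤ ∑ i, u i).eq_or_lt with hS | hS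
  · have hzero := (sum_eq_zero_iff_of_nonneg fun i _ => hu i).1 hS.symm
    simp [hzero]
  have hV := sum_pos_of_eq_zero_imp hv huv hS
  calc (∑ i, u i) * log ((∑ i, u i) / ∑ i, v i)
      = ∑ i, (u i * log ((∑ i, u i) / ∑ i, v i) + u i
          - (∑ i, u i) / (∑ i, v i) * v i) := by
        rw [sum_sub_distrib, sum_add_distrib, ← sum_mul, ← mul_sum]
        field_simp
        ring
    _ ≤ ∑ i, u i * log (u i / v i) :=
        sum_le_sum fun i _ => mul_log_add_sub_le_mul_log_div (hu i) (hv i) (huv i) (by positivity)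

theorem sum_mul_logb_div_sum_le (u v : ι → ℝ) (hu : ∀ i, 0 ≤ u i) (hv : ∀ i, 0 ≤ v i)
    (huv : ∀ i, v i = 0 → u i = 0) :
    (∑ i, u i) * logb 2 ((∑ i, u i) / ∑ i, v i) ≤ ∑ i, u i * logb 2 (u i / v i) := by
  simp only [logb, mul_div_assoc']
  rw [← sum_div]
  exact div_le_div_of_nonneg_right (sum_mul_log_div_sum_le u v hu hv huv)
    (log_nonneg one_le_two)

end LogSum

noncomputable def relEntropy {Ω : Type*} [Fintype Ω] (P Q : Ω → ℝ) : ℝ :=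
  ∑ ω, P ω * logb 2 (P ω / Q ω)

lemma mul_logb_mul_div_mul (a b c : ℝ) :
    a * c * logb 2 (a * c / (b * c)) = a * c * logb 2 (a / b) := by
  rcases eq_or_ne c 0 with rfl | hc
  · simp
  · rw [mul_div_mul_right _ _ hc]

lemma relEntropy_eq_add_compl {Ω : Type*} [Fintype Ω] (P Q T : Ω → ℝ) :
    relEntropy P Q = relEntropy (fun ω => P ω * T ω) (fun ω => Q ω * T ω)
      + relEntropy (fun ω => P ω * (1 - T ω)) (fun ω => Q ω * (1 - T ω)) := by
  simp only [relEntropy, mul_logb_mul_div_mul, ← sum_add_distrib]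
  exact sum_congr rfl fun ω _ => by ring

lemma mul_logb_sub_le_mul_logb_div {a q c : ℝ} (ha : 0 ≤ a) (hq : 0 < a → 0 < q) (hqc : q ≤ c) :
    a * logb 2 a - a * logb 2 c ≤ a * logb 2 (a / q) := by
  rcases ha.eq_or_lt with rfl | ha
  · simp
  have hq := hq ha
  rw [logb_div ha.ne' hq.ne', mul_sub]
  linarith [mul_le_mul_of_nonneg_left (logb_le_logb_of_le one_lt_two hq hqc) ha.le]

theorem one_sub_mul_logb_le_relEntropy_add_binH {Ω : Type*} [Fintype Ω] (P Q T : Ω → ℝ)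
    {k ε : ℝ} (hP0 : ∀ ω, 0 ≤ P ω) (hQ0 : ∀ ω, 0 ≤ Q ω) (hPQ : ∀ ω, Q ω = 0 → P ω = 0)
    (hT0 : ∀ ω, 0 ≤ T ω) (hT1 : ∀ ω, T ω ≤ 1)
    (hP : ∑ ω, P ω = 1) (hQ : ∑ ω, Q ω ≤ 1)
    (hPT : ∑ ω, P ω * T ω = 1 - ε) (hQT : ∑ ω, Q ω * T ω ≤ k⁻¹) (hε : ε < 1) :
    (1 - ε) * logb 2 k ≤ relEntropy P Q + binH ε := by
  have hT1' : ∀ ω, 0 ≤ 1 - T ω := fun ω => sub_nonneg.2 (hT1 ω)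
  have hPT' : ∑ ω, P ω * (1 - T ω) = ε := by
    simp only [mul_sub, mul_one, sum_sub_distrib, hP, hPT]; ring
  have hQT' : ∑ ω, Q ω * (1 - T ω) ≤ 1 :=
    (sum_le_sum fun ω _ => mul_le_of_le_one_right (hQ0 ω) (by linarith [hT0 ω])).trans hQ
  have habs : ∀ S : Ω → ℝ, ∀ ω, Q ω * S ω = 0 → P ω * S ω = 0 := fun S ω h => by
    rcases mul_eq_zero.1 h with h | h <;> simp [h, hPQ ω]
  have hpass := sum_mul_logb_div_sum_le _ _ (fun ω => mul_nonneg (hP0 ω) (hT0 ω))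
    (fun ω => mul_nonneg (hQ0 ω) (hT0 ω)) (habs T)
  have hfail := sum_mul_logb_div_sum_le _ _ (fun ω => mul_nonneg (hP0 ω) (hT1' ω))
    (fun ω => mul_nonneg (hQ0 ω) (hT1' ω)) (habs (1 - T ·))
  rw [hPT] at hpass
  rw [hPT'] at hfail
  have hpass' := mul_logb_sub_le_mul_logb_div (sub_nonneg.2 hε.le)
    (fun h => sum_pos_of_eq_zero_imp (fun ω => mul_nonneg (hQ0 ω) (hT0 ω)) (habs T) (hPT ▸ h))
    hQT
  have hfail' := mul_logb_sub_le_mul_logb_div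
    (hPT' ▸ sum_nonneg fun ω _ => mul_nonneg (hP0 ω) (hT1' ω))
    (fun h => sum_pos_of_eq_zero_imp (fun ω => mul_nonneg (hQ0 ω) (hT1' ω)) (habs (1 - T ·))
      (hPT' ▸ h))
    hQT'
  rw [logb_inv] at hpass'
  rw [logb_one, mul_zero, sub_zero] at hfail'
  rw [relEntropy_eq_add_compl P Q T, binH, relEntropy, relEntropy]
  linarith

section Markov

variable {X1 X2 Y : Type*}

/-- `P_{X1 X2} P_{Y|X2}`: the Markov chain `X1 – X2 – Y` with the `(X1, X2)`- and
`(X2, Y)`-marginals of `P`; division by zero makes it vanish where `P_{X2} = 0`. -/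
noncomputable def markovCoupling [Fintype X1] [Fintype Y] (P : X1 → X2 → Y → ℝ) :
    X1 → X2 → Y → ℝ :=
  fun x1 x2 y => (∑ y', P x1 x2 y') * (∑ x1', P x1' x2 y) / ∑ x1', ∑ y', P x1' x2 y'

lemma sum_sum_sum_comm [Fintype X1] [Fintype X2] [Fintype Y] (f : X1 → X2 → Y → ℝ) :
    ∑ x1, ∑ x2, ∑ y, f x1 x2 y = ∑ x2, ∑ y, ∑ x1, f x1 x2 y := by
  rw [sum_comm]
  exact sum_congr rfl fun _ _ => sum_comm

variable [Fintype X1] [Fintype Y] {P : X1 → X2 → Y → ℝ}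

lemma marginals_pos_of_pos (hP : ∀ x1 x2 y, 0 ≤ P x1 x2 y) {x1 x2 y}
    (h : 0 < P x1 x2 y) :
    0 < ∑ y', P x1 x2 y' ∧ 0 < ∑ x1', P x1' x2 y ∧ 0 < ∑ x1', ∑ y', P x1' x2 y' := by
  have hB : P x1 x2 y ≤ ∑ y', P x1 x2 y' := single_le_sum (fun y' _ => hP x1 x2 y') (mem_univ y)
  have hC : P x1 x2 y ≤ ∑ x1', P x1' x2 y :=
    single_le_sum (f := fun x1' => P x1' x2 y) (fun _ _ => hP _ _ _) (mem_univ x1)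
  have hA : ∑ y', P x1 x2 y' ≤ ∑ x1', ∑ y', P x1' x2 y' :=
    single_le_sum (f := fun x1' => ∑ y', P x1' x2 y') (fun _ _ => sum_nonneg fun _ _ => hP _ _ _)
      (mem_univ x1)
  exact ⟨by linarith, by linarith, by linarith⟩

lemma eq_zero_of_markovCoupling_eq_zero (hP : ∀ x1 x2 y, 0 ≤ P x1 x2 y) {x1 x2 y}
    (h : markovCoupling P x1 x2 y = 0) : P x1 x2 y = 0 := by
  by_contra hne
  obtain ⟨hB, hC, hA⟩ := marginals_pos_of_pos hP ((hP x1 x2 y).lt_of_ne (Ne.symm hne))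
  exact (div_pos (mul_pos hB hC) hA).ne' h

lemma markovCoupling_nonneg (hP : ∀ x1 x2 y, 0 ≤ P x1 x2 y) (x1 x2 y) :
    0 ≤ markovCoupling P x1 x2 y :=
  div_nonneg (mul_nonneg (sum_nonneg fun _ _ => hP _ _ _) (sum_nonneg fun _ _ => hP _ _ _))
    (sum_nonneg fun _ _ => sum_nonneg fun _ _ => hP _ _ _)

lemma sum_markovCoupling [Fintype X2] (P : X1 → X2 → Y → ℝ) :
    ∑ x1, ∑ x2, ∑ y, markovCoupling P x1 x2 y = ∑ x1, ∑ x2, ∑ y, P x1 x2 y := by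
  have hC : ∀ x2, ∑ y, ∑ x1, P x1 x2 y = ∑ x1, ∑ y, P x1 x2 y := fun _ => sum_comm
  rw [sum_comm, sum_comm (f := fun x1 x2 => ∑ y, P x1 x2 y)]
  refine sum_congr rfl fun x2 _ => ?_
  simp only [markovCoupling, ← sum_div, ← mul_sum, ← sum_mul, hC, mul_self_div_self]

lemma sum_markovCoupling_mul_le [Fintype X2] (hP : ∀ x1 x2 y, 0 ≤ P x1 x2 y)
    (T : X1 → X2 → Y → ℝ) {c : ℝ}
    (hT : ∀ x2 y, ∑ x1, (∑ y', P x1 x2 y') * T x1 x2 y ≤ c * ∑ x1, ∑ y', P x1 x2 y') :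
    ∑ x1, ∑ x2, ∑ y, markovCoupling P x1 x2 y * T x1 x2 y ≤ c * ∑ x1, ∑ x2, ∑ y, P x1 x2 y := by
  have hCA : ∀ x2 y, ∑ x1, ∑ y', P x1 x2 y' = 0 → ∑ x1, P x1 x2 y = 0 := fun x2 y hA =>
    le_antisymm (hA ▸ sum_le_sum fun x1 _ => single_le_sum (fun y' _ => hP x1 x2 y') (mem_univ y))
      (sum_nonneg fun _ _ => hP _ _ _)
  calc ∑ x1, ∑ x2, ∑ y, markovCoupling P x1 x2 y * T x1 x2 y
      = ∑ x2, ∑ y, (∑ x1, P x1 x2 y) / (∑ x1, ∑ y', P x1 x2 y') *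
          ∑ x1, (∑ y', P x1 x2 y') * T x1 x2 y := by
        rw [sum_sum_sum_comm]
        refine sum_congr rfl fun x2 _ => sum_congr rfl fun y _ => ?_
        rw [Finset.mul_sum]
        exact sum_congr rfl fun x1 _ => by rw [markovCoupling]; ring
    _ ≤ ∑ x2, ∑ y, (∑ x1, P x1 x2 y) / (∑ x1, ∑ y', P x1 x2 y') *
          (c * ∑ x1, ∑ y', P x1 x2 y') :=
        sum_le_sum fun x2 _ => sum_le_sum fun y _ => mul_le_mul_of_nonneg_left (hT x2 y)
          (div_nonneg (sum_nonneg fun _ _ => hP _ _ _)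
            (sum_nonneg fun _ _ => sum_nonneg fun _ _ => hP _ _ _))
    _ = ∑ x2, ∑ y, c * ∑ x1, P x1 x2 y :=
        sum_congr rfl fun x2 _ => sum_congr rfl fun y _ => by
          rw [mul_left_comm, div_mul_cancel_of_imp (hCA x2 y)]
    _ = c * ∑ x1, ∑ x2, ∑ y, P x1 x2 y := by simp only [sum_sum_sum_comm P, mul_sum]

lemma relEntropy_markovCoupling [Fintype X2] (hP : ∀ x1 x2 y, 0 ≤ P x1 x2 y) :
    relEntropy (fun ω : X1 × X2 × Y => P ω.1 ω.2.1 ω.2.2)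
      (fun ω => markovCoupling P ω.1 ω.2.1 ω.2.2) = miX1YcX2 P := by
  have hpoint : ∀ x1 x2 y, P x1 x2 y * logb 2 (P x1 x2 y / markovCoupling P x1 x2 y) =
      P x1 x2 y * logb 2 (P x1 x2 y) - P x1 x2 y * logb 2 (∑ y', P x1 x2 y')
        - P x1 x2 y * logb 2 (∑ x1', P x1' x2 y)
        + P x1 x2 y * logb 2 (∑ x1', ∑ y', P x1' x2 y') := by
    intro x1 x2 y
    rcases (hP x1 x2 y).eq_or_lt with h | h
    · simp [← h]
    obtain ⟨hB, hC, hA⟩ := marginals_pos_of_pos hP h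
    rw [markovCoupling, logb_div h.ne' (by positivity), logb_div (by positivity) hA.ne',
      logb_mul hB.ne' hC.ne']
    ring
  simp only [relEntropy, miX1YcX2, H2, Fintype.sum_prod_type, hpoint, sum_add_distrib,
    sum_sub_distrib, sum_neg_distrib]
  have hB : ∑ x1, ∑ x2, ∑ y, P x1 x2 y * logb 2 (∑ y', P x1 x2 y') =
      ∑ x1, ∑ x2, (∑ y, P x1 x2 y) * logb 2 (∑ y, P x1 x2 y) := by
    simp only [← sum_mul]
  have hC : ∑ x1, ∑ x2, ∑ y, P x1 x2 y * logb 2 (∑ x1', P x1' x2 y) =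
      ∑ x2, ∑ y, (∑ x1, P x1 x2 y) * logb 2 (∑ x1, P x1 x2 y) := by
    rw [sum_sum_sum_comm]
    simp only [← sum_mul]
  have hA : ∑ x1, ∑ x2, ∑ y, P x1 x2 y * logb 2 (∑ x1', ∑ y', P x1' x2 y') =
      ∑ x2, (∑ x1, ∑ y, P x1 x2 y) * logb 2 (∑ x1, ∑ y, P x1 x2 y) := by
    rw [sum_comm]
    simp only [← sum_mul]
  rw [hB, hC, hA]
  ring

lemma miX1YcX2_swap [Fintype X2] (P : X1 → X2 → Y → ℝ) :
    miX1YcX2 (fun x2 x1 y => P x1 x2 y) = miX2YcX1 P := by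
  simp only [miX1YcX2, miX2YcX1, H2, Fintype.sum_prod_type]
  rw [sum_comm (s := (univ : Finset X2)) (t := (univ : Finset X1)),
    sum_comm (s := (univ : Finset X2)) (t := (univ : Finset X1))]

lemma miX1YcX2_unit [Fintype X2] (P : X1 → X2 → Y → ℝ) (hP : ∑ x1, ∑ x2, ∑ y, P x1 x2 y = 1) :
    miX1YcX2 (fun (x : X1 × X2) (_ : Unit) y => P x.1 x.2 y) = miX1X2Y P := by
  simp [miX1YcX2, miX1X2Y, H2, Fintype.sum_prod_type, hP]

end Markov

section MAC

variable {X1 X2 Y : Type*} [Fintype X1] [Fintype X2] [Fintype Y]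

/-- `P` is a distribution of `(X1, X2, Y)` and `T` a randomized test accepting it with
probability `1 - ε`. -/
structure IsTestWithError (P T : X1 → X2 → Y → ℝ) (ε : ℝ) : Prop where
  nonneg : ∀ x1 x2 y, 0 ≤ P x1 x2 y
  sum_eq_one : ∑ x1, ∑ x2, ∑ y, P x1 x2 y = 1
  test_nonneg : ∀ x1 x2 y, 0 ≤ T x1 x2 y
  test_le_one : ∀ x1 x2 y, T x1 x2 y ≤ 1
  sum_mul_test : ∑ x1, ∑ x2, ∑ y, P x1 x2 y * T x1 x2 y = 1 - ε

variable {P T : X1 → X2 → Y → ℝ} {k ε : ℝ}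

theorem IsTestWithError.one_sub_mul_logb_le_miX1YcX2_add_binH (h : IsTestWithError P T ε)
    (hBT : ∀ x2 y, ∑ x1, (∑ y', P x1 x2 y') * T x1 x2 y ≤ k⁻¹ * ∑ x1, ∑ y', P x1 x2 y')
    (hε : ε < 1) :
    (1 - ε) * logb 2 k ≤ miX1YcX2 P + binH ε := by
  have hQT := sum_markovCoupling_mul_le h.nonneg T hBT
  rw [h.sum_eq_one, mul_one] at hQT
  rw [← relEntropy_markovCoupling h.nonneg]
  exact one_sub_mul_logb_le_relEntropy_add_binH _ _ (fun ω => T ω.1 ω.2.1 ω.2.2)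
    (fun _ => h.nonneg _ _ _) (fun _ => markovCoupling_nonneg h.nonneg _ _ _)
    (fun _ => eq_zero_of_markovCoupling_eq_zero h.nonneg)
    (fun _ => h.test_nonneg _ _ _) (fun _ => h.test_le_one _ _ _)
    (by simpa only [Fintype.sum_prod_type] using h.sum_eq_one)
    (by simpa only [Fintype.sum_prod_type, sum_markovCoupling] using h.sum_eq_one.le)
    (by simpa only [Fintype.sum_prod_type] using h.sum_mul_test)
    (by simpa only [Fintype.sum_prod_type] using hQT) hε

theorem IsTestWithError.one_sub_mul_logb_le_miX2YcX1_add_binH (h : IsTestWithError P T ε)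
    (hBT : ∀ x1 y, ∑ x2, (∑ y', P x1 x2 y') * T x1 x2 y ≤ k⁻¹ * ∑ x2, ∑ y', P x1 x2 y')
    (hε : ε < 1) :
    (1 - ε) * logb 2 k ≤ miX2YcX1 P + binH ε := by
  have hswap : IsTestWithError (fun x2 x1 y => P x1 x2 y) (fun x2 x1 y => T x1 x2 y) ε :=
    ⟨fun _ _ _ => h.nonneg _ _ _, by rw [sum_comm]; exact h.sum_eq_one,
      fun _ _ _ => h.test_nonneg _ _ _, fun _ _ _ => h.test_le_one _ _ _,
      by rw [sum_comm]; exact h.sum_mul_test⟩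
  rw [← miX1YcX2_swap]
  exact hswap.one_sub_mul_logb_le_miX1YcX2_add_binH hBT hε

theorem IsTestWithError.one_sub_mul_logb_le_miX1X2Y_add_binH (h : IsTestWithError P T ε)
    (hBT : ∀ y, ∑ x1, ∑ x2, (∑ y', P x1 x2 y') * T x1 x2 y ≤ k⁻¹) (hε : ε < 1) :
    (1 - ε) * logb 2 k ≤ miX1X2Y P + binH ε := by
  have hunit : IsTestWithError (fun (x : X1 × X2) (_ : Unit) y => P x.1 x.2 y)
      (fun x _ y => T x.1 x.2 y) ε := by
    refine ⟨fun _ _ _ => h.nonneg _ _ _, ?_, fun _ _ _ => h.test_nonneg _ _ _,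
      fun _ _ _ => h.test_le_one _ _ _, ?_⟩ <;>
    simp only [Fintype.sum_prod_type, Fintype.sum_unique, h.sum_eq_one, h.sum_mul_test]
  rw [← miX1YcX2_unit P h.sum_eq_one]
  refine hunit.one_sub_mul_logb_le_miX1YcX2_add_binH (fun _ y => ?_) hε
  simpa only [Fintype.sum_prod_type, Fintype.sum_unique, h.sum_eq_one, mul_one] using hBT y

end MAC

lemma div_mul_div_cancel_of_le {a b c : ℝ} (ha : 0 ≤ a) (hab : a ≤ b) :
    b / c * (a / b) = a / c := by
  rw [div_mul_comm, div_mul_eq_mul_div, div_mul_cancel_of_imp fun h => le_antisymm (h ▸ hab) ha]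

lemma sum_div_le_inv_mul_sum_div {ι : Type*} [Fintype ι] {a b : ι → ℝ} {k c : ℝ} (hk : 0 < k)
    (hc : 0 ≤ c) (hab : k * ∑ i, a i ≤ ∑ i, b i) : ∑ i, a i / c ≤ k⁻¹ * ∑ i, b i / c := by
  rw [← sum_div, ← sum_div, ← mul_div_assoc]
  exact div_le_div_of_nonneg_right ((le_inv_mul_iff₀ hk).2 hab) hc

lemma sum_channel_mul {X1 X2 Y : Type*} [Fintype Y] {W : X1 → X2 → Y → ℝ}
    (hW1 : ∀ x1 x2, ∑ y, W x1 x2 y = 1) (x1 : X1) (x2 : X2) (a : ℝ) :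
    ∑ y, W x1 x2 y * a = a := by
  rw [← sum_mul, hW1, one_mul]

lemma isTestWithError_of_feasible {X1 X2 Y : Type*} [Fintype X1] [Fintype X2] [Fintype Y]
    {W r : X1 → X2 → Y → ℝ} {p : X1 → X2 → ℝ} {c ε : ℝ} (hW0 : ∀ x1 x2 y, 0 ≤ W x1 x2 y)
    (hW1 : ∀ x1 x2, ∑ y, W x1 x2 y = 1) (hc : 0 < c) (hp : ∑ x1, ∑ x2, p x1 x2 = c)
    (hr0 : ∀ x1 x2 y, 0 ≤ r x1 x2 y) (hrp : ∀ x1 x2 y, r x1 x2 y ≤ p x1 x2)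
    (hobj : 1 / c * ∑ x1, ∑ x2, ∑ y, W x1 x2 y * r x1 x2 y = 1 - ε) :
    IsTestWithError (fun x1 x2 y => W x1 x2 y * (p x1 x2 / c))
      (fun x1 x2 y => r x1 x2 y / p x1 x2) ε := by
  have hp0 : ∀ x1 x2, 0 ≤ p x1 x2 := fun x1 x2 => by
    obtain ⟨y⟩ : Nonempty Y := by
      by_contra h
      simpa [not_nonempty_iff.1 h] using hW1 x1 x2
    exact (hr0 x1 x2 y).trans (hrp x1 x2 y)
  refine ⟨fun x1 x2 y => mul_nonneg (hW0 ..) (div_nonneg (hp0 ..) hc.le), ?_,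
    fun x1 x2 y => div_nonneg (hr0 ..) (hp0 ..),
    fun x1 x2 y => div_le_one_of_le₀ (hrp ..) (hp0 ..), ?_⟩
  · simp only [sum_channel_mul hW1, ← sum_div, hp, div_self hc.ne']
  · simp only [mul_assoc, div_mul_div_cancel_of_le (hr0 ..) (hrp ..), ← hobj, mul_sum]
    exact sum_congr rfl fun _ _ => sum_congr rfl fun _ _ => sum_congr rfl fun _ _ => by ring

theorem oneShot_outer_bounds {X1 X2 Y : Type*} [Fintype X1] [Fintype X2] [Fintype Y]
    (W : X1 → X2 → Y → ℝ)
    (hW0 : ∀ x1 x2 y, 0 ≤ W x1 x2 y)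
    (hW1 : ∀ x1 x2, ∑ y, W x1 x2 y = 1)
    (k1 k2 : ℕ) (hk1 : 0 < k1) (hk2 : 0 < k2)
    (r : X1 → X2 → Y → ℝ) (p : X1 → X2 → ℝ)
    (hr1 : ∀ y, ∑ x1, ∑ x2, r x1 x2 y ≤ 1)
    (hp1 : ∑ x1, ∑ x2, p x1 x2 = (k1 : ℝ) * (k2 : ℝ))
    (hrp1 : ∀ x2 y, (k1 : ℝ) * ∑ x1, r x1 x2 y ≤ ∑ x1, p x1 x2)
    (hrp2 : ∀ x1 y, (k2 : ℝ) * ∑ x2, r x1 x2 y ≤ ∑ x2, p x1 x2)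
    (hr0 : ∀ x1 x2 y, 0 ≤ r x1 x2 y)
    (hrp : ∀ x1 x2 y, r x1 x2 y ≤ p x1 x2)
    (ε : ℝ) (hε1 : ε < 1)
    (hobj : (1 / ((k1 : ℝ) * (k2 : ℝ))) * ∑ x1, ∑ x2, ∑ y, W x1 x2 y * r x1 x2 y
      = 1 - ε) :
    Real.logb 2 (k1 : ℝ) ≤
        (miX1YcX2 (fun x1 x2 y => W x1 x2 y * (p x1 x2 / ((k1 : ℝ) * (k2 : ℝ))))
          + binH ε) / (1 - ε) ∧
    Real.logb 2 (k2 : ℝ) ≤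
        (miX2YcX1 (fun x1 x2 y => W x1 x2 y * (p x1 x2 / ((k1 : ℝ) * (k2 : ℝ))))
          + binH ε) / (1 - ε) ∧
    Real.logb 2 (k1 : ℝ) + Real.logb 2 (k2 : ℝ) ≤
        (miX1X2Y (fun x1 x2 y => W x1 x2 y * (p x1 x2 / ((k1 : ℝ) * (k2 : ℝ))))
          + binH ε) / (1 - ε) := by
  have hk : (0 : ℝ) < k1 * k2 := by positivity
  have htest := isTestWithError_of_feasible hW0 hW1 hk hp1 hr0 hrp hobj
  have hcancel : ∀ x1 x2 y, p x1 x2 / (k1 * k2) * (r x1 x2 y / p x1 x2) = r x1 x2 y / (k1 * k2) :=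
    fun x1 x2 y => div_mul_div_cancel_of_le (hr0 ..) (hrp ..)
  have h1 := htest.one_sub_mul_logb_le_miX1YcX2_add_binH (k := k1) (fun x2 y => by
    simpa only [sum_channel_mul hW1, hcancel] using
      sum_div_le_inv_mul_sum_div (by positivity) hk.le (hrp1 x2 y)) hε1
  have h2 := htest.one_sub_mul_logb_le_miX2YcX1_add_binH (k := k2) (fun x1 y => by
    simpa only [sum_channel_mul hW1, hcancel] using
      sum_div_le_inv_mul_sum_div (by positivity) hk.le (hrp2 x1 y)) hε1
  have h3 := htest.one_sub_mul_logb_le_miX1X2Y_add_binH (k := k1 * k2) (fun y => by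
    simpa only [sum_channel_mul hW1, hcancel, ← sum_div, one_div] using
      div_le_div_of_nonneg_right (hr1 y) hk.le) hε1
  rw [logb_mul (by positivity) (by positivity)] at h3
  refine ⟨?_, ?_, ?_⟩ <;> rw [le_div_iff₀ (sub_pos.2 hε1), mul_comm] <;> assumption
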